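/- Let 0 < q < p ≤ 1 and let n ≥ 3 be a natural number. Then for every x ∈ [0,1], B_{n,p,q}(t⁴;x) = (p^{3n-3}/[n]³_{p,q}) x + (q(3p²+3pq+q²)[n-1]_{p,q} p^{2n-4}/[n]³_{p,q}) x² + (q³(3p²+2pq+q²)[n-1]_{p,q}[n-2]_{p,q} p^{n-3}/[n]³_{p,q}) x³ + (q⁶ [n-1]_{p,q}[n-2]_{p,q}[n-3]_{p,q}/[n]³_{p,q}) x⁴. -/

import Mathlib

open Finset Set Filter Topology

/-- The (p,q)-integer `[n]_{p,q} = ∑_{i=0}^{n-1} p^(n-1-i) q^i`. -/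
noncomputable def pqInt (p q : ℝ) (n : ℕ) : ℝ :=
  ∑ i ∈ Finset.range n, p ^ (n - 1 - i) * q ^ i

/-- The (p,q)-factorial `[n]_{p,q}! = ∏_{j=1}^n [j]_{p,q}`. -/
noncomputable def pqFactorial (p q : ℝ) (n : ℕ) : ℝ :=
  ∏ j ∈ Finset.range n, pqInt p q (j + 1)

/-- The (p,q)-binomial coefficient. -/
noncomputable def pqChoose (p q : ℝ) (n k : ℕ) : ℝ :=
  pqFactorial p q n / (pqFactorial p q k * pqFactorial p q (n - k))

/-- The node `p^(n-k) [k]_{p,q} / [n]_{p,q}` of the (p,q)-Bernstein operator. -/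
noncomputable def pqNode (p q : ℝ) (n k : ℕ) : ℝ :=
  p ^ (n - k) * pqInt p q k / pqInt p q n

/-- The basis function
`p^((k(k-1)-n(n-1))/2) C(n,k)_{p,q} x^k ∏_{s=0}^{n-k-1} (p^s - q^s x)`,
where `p^((k(k-1)-n(n-1))/2)` is written as `p^(k(k-1)/2) / p^(n(n-1)/2)`. -/
noncomputable def pqBasis (p q : ℝ) (n k : ℕ) (x : ℝ) : ℝ :=
  (p ^ (k.choose 2) / p ^ (n.choose 2)) * pqChoose p q n k * x ^ k *
    ∏ s ∈ Finset.range (n - k), (p ^ s - q ^ s * x)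

/-- The (p,q)-Bernstein operator `B_{n,p,q}(f;x)`. -/
noncomputable def pqBernstein (p q : ℝ) (n : ℕ) (f : ℝ → ℝ) (x : ℝ) : ℝ :=
  ∑ k ∈ Finset.range (n + 1), pqBasis p q n k x * f (pqNode p q n k)

/-- The bivariate (p,q)-Bernstein operator
`B_{n,m}^{(p₁,q₁),(p₂,q₂)}(f;x,y)`. -/
noncomputable def pqBernstein2 (p₁ q₁ p₂ q₂ : ℝ) (n m : ℕ)
    (f : ℝ → ℝ → ℝ) (x y : ℝ) : ℝ :=
  ∑ k ∈ Finset.range (n + 1), ∑ j ∈ Finset.range (m + 1),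
    pqBasis p₁ q₁ n k x * pqBasis p₂ q₂ m j y *
      f (pqNode p₁ q₁ n k) (pqNode p₂ q₂ m j)

/-! Write `u_{n,k} = p^(n-k) [k]` for the numerators of the nodes and
`M_{n,r}(x) = ∑_k b_{n,k}(x) u_{n,k}^r` (`pqMoment`), so that
`B_{n,p,q}(t^r; x) = M_{n,r}(x) / [n]^r`.
The absorption identity `b_{n+1,k+1}(x) u_{n+1,k+1} = [n+1] x b_{n,k}(x)` together with
`u_{n+1,k+1} = q u_{n,k} + p^n` and the binomial theorem gives
`M_{n+1,r+1} = [n+1] x ∑_i C(r,i) q^i p^(n(r-i)) M_{n,i}`.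
Starting from the partition of unity `M_{n,0} = 1`, which follows from a Pascal-type recurrence
for the basis, four steps of this recurrence give `M_{n,4}`. -/

noncomputable def pqMoment (p q : ℝ) (n r : ℕ) (x : ℝ) : ℝ :=
  ∑ k ∈ range (n + 1), pqBasis p q n k x * (p ^ (n - k) * pqInt p q k) ^ r

section
variable {p q : ℝ}

lemma pqInt_zero : pqInt p q 0 = 0 := by simp [pqInt]

lemma pqInt_succ (n : ℕ) : pqInt p q (n + 1) = p ^ n + q * pqInt p q n := by
  rw [pqInt, sum_range_succ', pqInt, mul_sum, add_comm]
  congr 1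
  · simp
  · refine sum_congr rfl fun i _ => ?_
    rw [show n + 1 - 1 - (i + 1) = n - 1 - i by omega]
    ring

lemma pqInt_add (k m : ℕ) :
    pqInt p q (k + m) = q ^ m * pqInt p q k + p ^ k * pqInt p q m := by
  induction m with
  | zero => simp [pqInt_zero]
  | succ m ih =>
    rw [← add_assoc, pqInt_succ, ih, pqInt_succ]
    ring

lemma pow_sub_mul_pqInt_succ {m j : ℕ} (h : j ≤ m) :
    p ^ (m - j) * pqInt p q (j + 1) = q * (p ^ (m - j) * pqInt p q j) + p ^ m := by
  rw [pqInt_succ, mul_add, ← pow_add, Nat.sub_add_cancel h]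
  ring

lemma pqInt_pos (hp : 0 < p) (hq : 0 ≤ q) {n : ℕ} (hn : 0 < n) : 0 < pqInt p q n := by
  obtain ⟨n, rfl⟩ := Nat.exists_eq_add_one.mpr hn
  rw [pqInt_succ]
  have : 0 ≤ pqInt p q n := sum_nonneg fun i _ => by positivity
  positivity

lemma pqFactorial_zero : pqFactorial p q 0 = 1 := prod_range_zero _

lemma pqFactorial_succ (n : ℕ) :
    pqFactorial p q (n + 1) = pqFactorial p q n * pqInt p q (n + 1) :=
  prod_range_succ _ n

lemma pqFactorial_pos (hp : 0 < p) (hq : 0 ≤ q) (n : ℕ) : 0 < pqFactorial p q n :=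
  prod_pos fun _ _ => pqInt_pos hp hq (Nat.succ_pos _)

lemma pqChoose_zero_right (hp : 0 < p) (hq : 0 ≤ q) (n : ℕ) : pqChoose p q n 0 = 1 := by
  rw [pqChoose, Nat.sub_zero, pqFactorial_zero, one_mul,
    div_self (pqFactorial_pos hp hq n).ne']

lemma pqChoose_self (hp : 0 < p) (hq : 0 ≤ q) (n : ℕ) : pqChoose p q n n = 1 := by
  rw [pqChoose, Nat.sub_self, pqFactorial_zero, mul_one,
    div_self (pqFactorial_pos hp hq n).ne']

lemma pqChoose_succ_succ (hp : 0 < p) (hq : 0 ≤ q) {n k : ℕ} (h : k < n) :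
    pqChoose p q (n + 1) (k + 1) =
      q ^ (n - k) * pqChoose p q n k + p ^ (k + 1) * pqChoose p q n (k + 1) := by
  obtain ⟨r, rfl⟩ : ∃ r, n = k + 1 + r := ⟨n - (k + 1), by omega⟩
  have hsplit := pqInt_add (p := p) (q := q) (k + 1) (r + 1)
  rw [show k + 1 + (r + 1) = k + 1 + r + 1 by omega] at hsplit
  simp only [pqChoose, show k + 1 + r + 1 - (k + 1) = r + 1 by omega,
    show k + 1 + r - (k + 1) = r by omega, show k + 1 + r - k = r + 1 by omega,
    pqFactorial_succ (k + 1 + r), pqFactorial_succ k, pqFactorial_succ r, hsplit]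
  have := (pqFactorial_pos hp hq (k + 1 + r)).ne'
  have := (pqFactorial_pos hp hq k).ne'
  have := (pqFactorial_pos hp hq r).ne'
  have := (pqInt_pos hp hq k.succ_pos).ne'
  have := (pqInt_pos hp hq r.succ_pos).ne'
  field_simp

lemma pqChoose_succ_succ_mul (hp : 0 < p) (hq : 0 ≤ q) (n k : ℕ) :
    pqChoose p q (n + 1) (k + 1) * pqInt p q (k + 1) = pqInt p q (n + 1) * pqChoose p q n k := by
  simp only [pqChoose, Nat.add_sub_add_right, pqFactorial_succ]
  have := (pqFactorial_pos hp hq k).ne'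
  have := (pqFactorial_pos hp hq (n - k)).ne'
  have := (pqInt_pos hp hq k.succ_pos).ne'
  field_simp

lemma pqBasis_self (hp : 0 < p) (hq : 0 ≤ q) (n : ℕ) (x : ℝ) : pqBasis p q n n x = x ^ n := by
  rw [pqBasis, pqChoose_self hp hq, Nat.sub_self, prod_range_zero, div_self (by positivity)]
  ring

lemma pqBasis_succ_zero (hp : 0 < p) (hq : 0 ≤ q) (m : ℕ) (x : ℝ) :
    pqBasis p q (m + 1) 0 x = (1 - (q / p) ^ m * x) * pqBasis p q m 0 x := by
  simp only [pqBasis, pqChoose_zero_right hp hq, Nat.sub_zero, prod_range_succ,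
    Nat.choose_succ_succ', Nat.choose_one_right, pow_add, div_pow]
  generalize ∏ s ∈ range m, (p ^ s - q ^ s * x) = P
  field_simp

lemma pqBasis_succ_succ (hp : 0 < p) (hq : 0 ≤ q) {m j : ℕ} (h : j < m) (x : ℝ) :
    pqBasis p q (m + 1) (j + 1) x =
      (q / p) ^ (m - j) * x * pqBasis p q m j x +
        (1 - (q / p) ^ (m - (j + 1)) * x) * pqBasis p q m (j + 1) x := by
  obtain ⟨r, rfl⟩ : ∃ r, m = j + 1 + r := ⟨m - (j + 1), by omega⟩
  simp only [pqBasis, pqChoose_succ_succ hp hq h, Nat.add_sub_add_right,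
    show j + 1 + r - j = r + 1 by omega, show j + 1 + r - (j + 1) = r by omega, prod_range_succ,
    Nat.choose_succ_succ', Nat.choose_one_right, pow_add, div_pow]
  field_simp

lemma sum_pqBasis_succ (hp : 0 < p) (hq : 0 ≤ q) (m : ℕ) (x : ℝ) :
    ∑ k ∈ range (m + 2), pqBasis p q (m + 1) k x =
      ∑ k ∈ range (m + 1), pqBasis p q m k x := by
  set r : ℕ → ℝ := fun k => (q / p) ^ (m - k) * x * pqBasis p q m k x with hr
  have hmid : ∀ j ∈ range m,
      pqBasis p q (m + 1) (j + 1) x = pqBasis p q m (j + 1) x + (r j - r (j + 1)) := by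
    intro j hj
    rw [pqBasis_succ_succ hp hq (mem_range.mp hj)]
    ring
  rw [sum_range_succ, sum_range_succ', sum_congr rfl hmid, sum_add_distrib, sum_range_sub',
    pqBasis_succ_zero hp hq, pqBasis_self hp hq, sum_range_succ' _ m]
  simp only [hr, Nat.sub_zero, Nat.sub_self, pqBasis_self hp hq]
  ring

lemma sum_pqBasis (hp : 0 < p) (hq : 0 ≤ q) (m : ℕ) (x : ℝ) :
    ∑ k ∈ range (m + 1), pqBasis p q m k x = 1 := by
  induction m with
  | zero => simp [pqBasis_self hp hq]
  | succ m ih => rw [sum_pqBasis_succ hp hq, ih]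

lemma pqBasis_succ_succ_mul (hp : 0 < p) (hq : 0 ≤ q) {m j : ℕ} (h : j ≤ m) (x : ℝ) :
    pqBasis p q (m + 1) (j + 1) x * (p ^ (m - j) * pqInt p q (j + 1)) =
      pqInt p q (m + 1) * x * pqBasis p q m j x := by
  obtain ⟨r, rfl⟩ : ∃ r, m = j + r := ⟨m - j, by omega⟩
  have key := pqChoose_succ_succ_mul (p := p) (q := q) hp hq (j + r) j
  simp only [pqBasis, Nat.add_sub_add_right, Nat.add_sub_cancel_left,
    Nat.choose_succ_succ', Nat.choose_one_right, pow_add]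
  generalize ∏ s ∈ range r, (p ^ s - q ^ s * x) = P
  field_simp
  linear_combination (x * x ^ j * P) * key

lemma pqBernstein_pow (n r : ℕ) (x : ℝ) :
    pqBernstein p q n (fun t => t ^ r) x = pqMoment p q n r x / pqInt p q n ^ r := by
  simp only [pqBernstein, pqMoment, pqNode, div_pow, sum_div, mul_div_assoc']

lemma pqMoment_zero (hp : 0 < p) (hq : 0 ≤ q) (n : ℕ) (x : ℝ) : pqMoment p q n 0 x = 1 := by
  simp only [pqMoment, pow_zero, mul_one, sum_pqBasis hp hq]

lemma pqMoment_succ_succ (hp : 0 < p) (hq : 0 ≤ q) (m r : ℕ) (x : ℝ) :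
    pqMoment p q (m + 1) (r + 1) x = pqInt p q (m + 1) * x *
      ∑ i ∈ range (r + 1), q ^ i * p ^ (m * (r - i)) * r.choose i * pqMoment p q m i x := by
  have hterm : ∀ j ∈ range (m + 1),
      pqBasis p q (m + 1) (j + 1) x * (p ^ (m + 1 - (j + 1)) * pqInt p q (j + 1)) ^ (r + 1) =
        pqInt p q (m + 1) * x * ∑ i ∈ range (r + 1), q ^ i * p ^ (m * (r - i)) * r.choose i *
          (pqBasis p q m j x * (p ^ (m - j) * pqInt p q j) ^ i) := by
    intro j hj
    have hjm : j ≤ m := Nat.lt_succ_iff.mp (mem_range.mp hj)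
    rw [Nat.add_sub_add_right, pow_succ', ← mul_assoc, pqBasis_succ_succ_mul hp hq hjm,
      pow_sub_mul_pqInt_succ hjm, add_pow, mul_sum, mul_sum]
    refine sum_congr rfl fun i _ => ?_
    rw [← pow_mul, mul_pow]
    ring
  rw [pqMoment, sum_range_succ', pqInt_zero, mul_zero, zero_pow r.succ_ne_zero, mul_zero,
    add_zero, sum_congr rfl hterm, ← mul_sum, sum_comm]
  simp only [pqMoment, mul_sum]

lemma pqMoment_one (hp : 0 < p) (hq : 0 ≤ q) (n : ℕ) (x : ℝ) :
    pqMoment p q n 1 x = pqInt p q n * x := by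
  cases n with
  | zero => simp [pqMoment, pqInt_zero]
  | succ m => rw [pqMoment_succ_succ hp hq]; norm_num [pqMoment_zero hp hq]

lemma pqMoment_two (hp : 0 < p) (hq : 0 ≤ q) (m : ℕ) (x : ℝ) :
    pqMoment p q (m + 1) 2 x = pqInt p q (m + 1) * x * (p ^ m + q * pqInt p q m * x) := by
  rw [pqMoment_succ_succ hp hq]
  simp only [sum_range_succ, sum_range_zero, pqMoment_zero hp hq, pqMoment_one hp hq,
    Nat.choose_zero_right, Nat.choose_self]
  ring

lemma pqMoment_three (hp : 0 < p) (hq : 0 ≤ q) (m : ℕ) (x : ℝ) :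
    pqMoment p q (m + 2) 3 x = pqInt p q (m + 2) * x * (p ^ (2 * (m + 1)) +
      2 * q * p ^ (m + 1) * pqInt p q (m + 1) * x +
        q ^ 2 * pqInt p q (m + 1) * x * (p ^ m + q * pqInt p q m * x)) := by
  rw [pqMoment_succ_succ hp hq]
  simp only [sum_range_succ, sum_range_zero, pqMoment_zero hp hq, pqMoment_one hp hq,
    pqMoment_two hp hq, Nat.choose_zero_right, Nat.choose_self, Nat.choose_one_right]
  ring

end

theorem pqBernstein_moment_e4_general (p q : ℝ) (n : ℕ)
    (hq : 0 < q) (hqp : q < p) (hn : 3 ≤ n)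
    (x : ℝ) :
    pqBernstein p q n (fun t => t ^ 4) x =
      (p ^ (3 * n - 3) / (pqInt p q n) ^ 3) * x +
      (q * (3 * p ^ 2 + 3 * p * q + q ^ 2) * pqInt p q (n - 1) * p ^ (2 * n - 4) /
        (pqInt p q n) ^ 3) * x ^ 2 +
      (q ^ 3 * (3 * p ^ 2 + 2 * p * q + q ^ 2) * pqInt p q (n - 1) * pqInt p q (n - 2) *
        p ^ (n - 3) / (pqInt p q n) ^ 3) * x ^ 3 +
      (q ^ 6 * pqInt p q (n - 1) * pqInt p q (n - 2) * pqInt p q (n - 3) /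
        (pqInt p q n) ^ 3) * x ^ 4 := by
  have hp : 0 < p := hq.trans hqp
  obtain ⟨m, rfl⟩ : ∃ m, n = m + 3 := ⟨n - 3, by omega⟩
  have hI : pqInt p q (m + 3) ≠ 0 := (pqInt_pos hp hq.le (by omega)).ne'
  rw [show 3 * (m + 3) - 3 = 3 * (m + 2) by omega, show 2 * (m + 3) - 4 = 2 * (m + 1) by omega,
    show m + 3 - 1 = m + 2 by omega, show m + 3 - 2 = m + 1 by omega, Nat.add_sub_cancel,
    pqBernstein_pow, pqMoment_succ_succ hp hq.le]
  simp only [sum_range_succ, sum_range_zero, pqMoment_zero hp hq.le, pqMoment_one hp hq.le,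
    pqMoment_two hp hq.le, pqMoment_three hp hq.le, Nat.choose_zero_right, Nat.choose_self,
    Nat.choose_one_right, Nat.choose_succ_self_right]
  field_simp
  ring

theorem pqBernstein_moment_e4 (p q : ℝ) (n : ℕ)
    (hq : 0 < q) (hqp : q < p) (hp : p ≤ 1) (hn : 3 ≤ n)
    (x : ℝ) (hx : x ∈ Set.Icc (0 : ℝ) 1) :
    pqBernstein p q n (fun t => t ^ 4) x =
      (p ^ (3 * n - 3) / (pqInt p q n) ^ 3) * x +
      (q * (3 * p ^ 2 + 3 * p * q + q ^ 2) * pqInt p q (n - 1) * p ^ (2 * n - 4) /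
        (pqInt p q n) ^ 3) * x ^ 2 +
      (q ^ 3 * (3 * p ^ 2 + 2 * p * q + q ^ 2) * pqInt p q (n - 1) * pqInt p q (n - 2) *
        p ^ (n - 3) / (pqInt p q n) ^ 3) * x ^ 3 +
      (q ^ 6 * pqInt p q (n - 1) * pqInt p q (n - 2) * pqInt p q (n - 3) /
        (pqInt p q n) ^ 3) * x ^ 4 :=
  pqBernstein_moment_e4_general p q n hq hqp hn x
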